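/- arXiv:2109.15145 — 4 statements merged into one kernel-verified Lean document; each statement's English description precedes it below -/
import Mathlib

section
/- For all integers a, b with a ≥ 2, b ≥ 2 and a + b ≥ 12, the plane partition numbers satisfy the strict Bessenrodt–Ono inequality pp(a) · pp(b) > pp(a+b); moreover, pp(a) · pp(b) = pp(a+b) never holds for any integers a, b ≥ 2. -/
/-- `σ₂(n) = ∑_{d ∣ n} d²`, the sum of the squares of the divisors of `n`. -/
def sigma2 (n : ℕ) : ℕ := ∑ d ∈ n.divisors, d ^ 2

/-- The plane partition function, defined by `pp 0 = 1` and the MacMahon recurrence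
`n · pp n = ∑_{k=1}^{n} σ₂(k) · pp (n−k)`. Its values are the natural numbers
`1, 1, 3, 6, 13, 24, 48, …`. -/
def pp : ℕ → ℚ
  | 0 => 1
  | n + 1 => (∑ k ∈ Finset.range (n + 1), (sigma2 (k + 1) : ℚ) * pp (n - k)) / (n + 1)


def Lsig : List Nat := [0, 1, 5, 10, 21, 26, 50, 50, 85, 91, 130, 122, 210, 170, 250, 260, 341, 290, 455, 362, 546, 500, 610, 530, 850, 651, 850, 820, 1050, 842, 1300, 962, 1365, 1220, 1450, 1300, 1911, 1370, 1810, 1700, 2210, 1682, 2500, 1850, 2562, 2366, 2650, 2210, 3410, 2451, 3255, 2900, 3570, 2810, 4100, 3172, 4250, 3620, 4210, 3482, 5460, 3722, 4810, 4550]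
def Lpp : List Nat := [1, 1, 3, 6, 13, 24, 48, 86, 160, 282, 500, 859, 1479, 2485, 4167, 6879, 11297, 18334, 29601, 47330, 75278, 118794, 186475, 290783, 451194, 696033, 1068745, 1632658, 2483234, 3759612, 5668963, 8512309, 12733429, 18974973, 28175955, 41691046, 61484961, 90379784, 132441995, 193487501, 281846923, 409383981, 593001267, 856667495, 1234363833, 1774079109, 2543535902, 3637993036, 5191304973, 7391026522, 10499640707, 14883573114, 21053676445, 29720561230, 41871334614, 58874385349, 82623976486, 115737404664, 161825846160, 225863047430, 314689799781, 437699333376, 607771804065, 842541287719]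

set_option maxRecDepth 100000
set_option maxHeartbeats 1000000
set_option synthInstance.maxSize 1000

lemma sig_eval : ∀ k < 64, sigma2 k = Lsig.getD k 0 := by decide
lemma rec_check : ∀ n < 63, (∑ k ∈ Finset.range (n+1), Lsig.getD (k+1) 0 * Lpp.getD (n-k) 0) = (n+1) * Lpp.getD (n+1) 0 := by decide
lemma base_gt_nat : ∀ a < 62, ∀ b < 62, 2 ≤ a → 2 ≤ b → 12 ≤ a+b → a+b ≤ 63 → Lpp.getD (a+b) 0 < Lpp.getD a 0 * Lpp.getD b 0 := by decide
lemma ne_small_nat : ∀ a < 10, ∀ b < 10, 2 ≤ a → 2 ≤ b → a+b ≤ 11 → Lpp.getD a 0 * Lpp.getD b 0 ≠ Lpp.getD (a+b) 0 := by decide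
lemma F_nat : ∀ m < 10, ∀ b < 10, 2 ≤ m → 2 ≤ b → m+b ≤ 11 → Lpp.getD (m+b) 0 ≤ Lpp.getD m 0 * Lpp.getD b 0 + 24 := by decide
lemma lb_base_nat : ∀ a < 64, 32 ≤ a → 542*(a+1)^2 ≤ Lpp.getD a 0 := by decide
lemma ii_base_nat : ∀ m < 64, 4 ≤ m → (m+2)^2 ≤ 3 * Lpp.getD m 0 := by decide

lemma pp_rec (m : ℕ) : ((m:ℚ)+1) * pp (m+1) = ∑ k ∈ Finset.range (m+1), (sigma2 (k+1) : ℚ) * pp (m-k) := by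
  rw [pp, mul_div_cancel₀]; positivity

lemma sig_ge_one (k : ℕ) : 1 ≤ sigma2 (k+1) := by
  have h1 : (1:ℕ) ∈ (k+1).divisors := Nat.one_mem_divisors.2 (Nat.succ_ne_zero k)
  calc 1 = 1^2 := by norm_num
  _ ≤ ∑ d ∈ (k+1).divisors, d^2 :=
      Finset.single_le_sum (f := fun d => d^2) (fun d _ => Nat.zero_le _) h1

lemma pp_ge_one : ∀ n, (1:ℚ) ≤ pp n := by
  intro n
  induction n using Nat.strong_induction_on with
  | _ n ih =>
    match n with
    | 0 => norm_num [pp]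
    | Nat.succ m =>
      have h : ((m:ℚ)+1) * 1 ≤ ((m:ℚ)+1) * pp (m+1) := by
        rw [pp_rec]
        calc ((m:ℚ)+1) * 1 = ∑ _k ∈ Finset.range (m+1), (1:ℚ) := by
              simp [Finset.sum_const]
        _ ≤ ∑ k ∈ Finset.range (m+1), (sigma2 (k+1) : ℚ) * pp (m-k) := by
              apply Finset.sum_le_sum
              intro k hk
              have h1 : (1:ℚ) ≤ (sigma2 (k+1) : ℚ) := by exact_mod_cast sig_ge_one k
              have h2 : (1:ℚ) ≤ pp (m-k) := ih (m-k) (by omega)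
              nlinarith
      have hpos : (0:ℚ) < (m:ℚ)+1 := by positivity
      have := le_of_mul_le_mul_left h hpos
      linarith

lemma pp_pos (n : ℕ) : 0 < pp n := lt_of_lt_of_le one_pos (pp_ge_one n)
lemma pp_nonneg (n : ℕ) : 0 ≤ pp n := (pp_pos n).le

lemma pp_eval : ∀ n, n ≤ 63 → pp n = (Lpp.getD n 0 : ℚ) := by
  intro n
  induction n using Nat.strong_induction_on with
  | _ n ih =>
    match n with
    | 0 => intro _; norm_num [pp, Lpp]
    | Nat.succ m =>
      intro hm
      have h := pp_rec m
      have hs : ∑ k ∈ Finset.range (m+1), (sigma2 (k+1) : ℚ) * pp (m-k)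
          = ((∑ k ∈ Finset.range (m+1), Lsig.getD (k+1) 0 * Lpp.getD (m-k) 0 : ℕ) : ℚ) := by
        rw [Nat.cast_sum]
        apply Finset.sum_congr rfl
        intro k hk
        simp only [Finset.mem_range] at hk
        rw [sig_eval (k+1) (by omega), ih (m-k) (by omega) (by omega)]
        push_cast
        ring
      rw [hs, rec_check m (by omega)] at h
      have hpos : ((m:ℚ)+1) ≠ 0 := by positivity
      show pp (m+1) = (Lpp.getD (m+1) 0 : ℚ)
      apply mul_left_cancel₀ hpos
      rw [h]; push_cast; ring

lemma sum_inv_sq : ∀ n : ℕ, ∑ d ∈ Finset.Ico 2 (n+2), (1:ℚ)/(d:ℚ)^2 ≤ 1 - 1/((n:ℚ)+1) := by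
  intro n
  induction n with
  | zero => simp
  | succ m ih =>
    rw [show m+1+2 = (m+2)+1 from rfl, Finset.sum_Ico_succ_top (by omega)]
    have hm1 : (0:ℚ) < (m:ℚ)+1 := by positivity
    have hm2 : (0:ℚ) < (m:ℚ)+2 := by positivity
    have h1 : (1:ℚ)/((m:ℚ)+2)^2 ≤ 1/((m:ℚ)+1) - 1/((m:ℚ)+2) := by
      rw [div_sub_div _ _ (ne_of_gt hm1) (ne_of_gt hm2),
        div_le_div_iff₀ (by positivity) (by positivity)]
      nlinarith
    have h2 : (1:ℚ)/((m:ℚ)+1+1) = 1/((m:ℚ)+2) := by ring_nf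
    push_cast
    rw [h2]
    push_cast at ih
    linarith

lemma sigma2_zero : sigma2 0 = 0 := by decide

lemma sigma2_le (n : ℕ) : (sigma2 n : ℚ) ≤ 2 * (n:ℚ)^2 := by
  rcases Nat.eq_zero_or_pos n with h | h
  · subst h; simp [sigma2_zero]
  have h0 : sigma2 n = ∑ d ∈ n.divisors, (n/d) ^ 2 := (Nat.sum_div_divisors n (·^2)).symm
  have h1 : (sigma2 n : ℚ) = ∑ d ∈ n.divisors, (((n/d : ℕ)) : ℚ)^2 := by
    rw [h0]; push_cast; ring
  have h2 : ∑ d ∈ n.divisors, (((n/d : ℕ)) : ℚ)^2 ≤ ∑ d ∈ Finset.Ico 1 (n+1), (((n/d : ℕ)) : ℚ)^2 := by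
    apply Finset.sum_le_sum_of_subset_of_nonneg
    · intro d hd
      rw [Nat.mem_divisors] at hd
      rw [Finset.mem_Ico]
      refine ⟨Nat.pos_of_mem_divisors (Nat.mem_divisors.2 hd), ?_⟩
      have := Nat.le_of_dvd h hd.1; omega
    · intro d _ _; positivity
  have h3 : ∑ d ∈ Finset.Ico 1 (n+1), (((n/d : ℕ)) : ℚ)^2 ≤ ∑ d ∈ Finset.Ico 1 (n+1), (n:ℚ)^2/(d:ℚ)^2 := by
    apply Finset.sum_le_sum
    intro d hd
    rw [← div_pow]
    exact pow_le_pow_left₀ (by positivity) (Nat.cast_div_le) 2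
  have h4 : ∑ d ∈ Finset.Ico 1 (n+1), (n:ℚ)^2/(d:ℚ)^2 = (n:ℚ)^2 * ∑ d ∈ Finset.Ico 1 (n+1), (1:ℚ)/(d:ℚ)^2 := by
    rw [Finset.mul_sum]; apply Finset.sum_congr rfl; intro d _; ring
  have h5 : ∑ d ∈ Finset.Ico 1 (n+1), (1:ℚ)/(d:ℚ)^2 ≤ 2 := by
    obtain ⟨m, rfl⟩ : ∃ m, n = m+1 := ⟨n-1, by omega⟩
    have h6 := sum_inv_sq m
    have h8 : 0 < 1/((m:ℚ)+1) := by positivity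
    have h9 : ∑ d ∈ Finset.Ico 2 (m+1+1), (1:ℚ)/(d:ℚ)^2 ≤ 1 := by
      have : Finset.Ico 2 (m+1+1) = Finset.Ico 2 (m+2) := by norm_num
      rw [this]; linarith
    calc ∑ d ∈ Finset.Ico 1 (m+1+1), (1:ℚ)/(d:ℚ)^2
        = 1/((1:ℕ):ℚ)^2 + ∑ d ∈ Finset.Ico (1+1) (m+1+1), (1:ℚ)/(d:ℚ)^2 :=
          Finset.sum_eq_sum_Ico_succ_bot (by omega) _
      _ ≤ 1 + 1 := by
            simp only [one_div] at h9 ⊢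
            push_cast
            norm_num
            linarith
      _ = 2 := by norm_num
  calc (sigma2 (n) : ℚ) = _ := h1
  _ ≤ _ := h2
  _ ≤ _ := h3
  _ = _ := h4
  _ ≤ (n:ℚ)^2 * 2 := by nlinarith [sq_nonneg (n:ℚ)]
  _ = 2*(n:ℚ)^2 := by ring

lemma sigma2_ge (n : ℕ) (h : 1 ≤ n) : (n:ℚ)^2 ≤ (sigma2 n : ℚ) := by
  have h1 : n ∈ n.divisors := Nat.mem_divisors_self n (by omega)
  have := Finset.single_le_sum (f := fun d => d^2) (fun d _ => Nat.zero_le _) h1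
  exact_mod_cast this

lemma sq_sum (h : ℕ) : (h:ℚ)^3 ≤ 3 * ∑ i ∈ Finset.range h, ((i:ℚ)+1)^2 := by
  induction h with
  | zero => simp
  | succ m ih =>
    rw [Finset.sum_range_succ]
    push_cast
    have h0 : (0:ℚ) ≤ (m:ℚ) := Nat.cast_nonneg m
    nlinarith [ih, h0]

lemma pp_lb : ∀ a : ℕ, 32 ≤ a → (542:ℚ)*((a:ℚ)+1)^2 ≤ pp a := by
  intro a
  induction a using Nat.strong_induction_on with
  | _ a ih =>
    intro ha
    rcases le_or_gt a 63 with h63 | h63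
    · rw [pp_eval a h63]
      have := lb_base_nat a (by omega) ha
      push_cast at this ⊢
      exact_mod_cast this
    -- a ≥ 64
    obtain ⟨p, rfl⟩ : ∃ p, a = p+1 := ⟨a-1, by omega⟩
    set h := (p+1)/2 with hh
    have hh1 : 32 ≤ h := by omega
    have hh2 : h ≤ p := by omega
    have hrec := pp_rec p
    have hstep : ∀ k ∈ Finset.range h, (542:ℚ)*((h:ℚ))^2 * ((k:ℚ)+1)^2 ≤ (sigma2 (k+1) : ℚ) * pp (p-k) := by
      intro k hk
      simp only [Finset.mem_range] at hk
      have hs := sigma2_ge (k+1) (by omega)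
      have hik : p-k < p+1 := by omega
      have hik2 : 32 ≤ p-k := by omega
      have hlb := ih (p-k) hik hik2
      have hcast : (h:ℚ) ≤ ((p-k : ℕ):ℚ)+1 := by
        have : h ≤ (p-k)+1 := by omega
        exact_mod_cast this
      have hppk : (542:ℚ)*((h:ℚ))^2 ≤ pp (p-k) := by
        have h0 : (0:ℚ) ≤ (h:ℚ) := by positivity
        nlinarith
      have hk1 : (0:ℚ) ≤ ((k:ℚ)+1)^2 := by positivity
      have hp1 : (0:ℚ) < pp (p-k) := pp_pos _
      have hcast2 : ((k:ℚ)+1)^2 ≤ ((k+1:ℕ):ℚ)^2 := by push_cast; ring_nf; norm_num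
      nlinarith
    have hsum : ∑ k ∈ Finset.range h, (542:ℚ)*((h:ℚ))^2 * ((k:ℚ)+1)^2
        ≤ ∑ k ∈ Finset.range (p+1), (sigma2 (k+1) : ℚ) * pp (p-k) := by
      apply le_trans (Finset.sum_le_sum hstep)
      apply Finset.sum_le_sum_of_subset_of_nonneg
      · apply Finset.range_subset_range.2; omega
      · intro k _ _
        have := pp_nonneg (p-k)
        positivity
    have hsq := sq_sum h
    have hS : (542:ℚ)*((h:ℚ))^2 * ((h:ℚ)^3/3) ≤ ∑ k ∈ Finset.range h, (542:ℚ)*((h:ℚ))^2 * ((k:ℚ)+1)^2 := by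
      rw [← Finset.mul_sum]
      have h0 : (0:ℚ) ≤ (h:ℚ) := by positivity
      nlinarith
    have hfin : ((p:ℚ)+1) * ((542:ℚ)*(((p:ℕ):ℚ)+1+1)^2) ≤ (542:ℚ)*((h:ℚ))^2 * ((h:ℚ)^3/3) := by
      have e1 : (2*h : ℚ) ≤ (p:ℚ)+1 := by
        have : 2*h ≤ p+1 := by omega
        exact_mod_cast this
      have e2 : ((p:ℚ)+1) ≤ 2*(h:ℚ)+1 := by
        have : p+1 ≤ 2*h+1 := by omega
        exact_mod_cast this
      have e3 : (32:ℚ) ≤ (h:ℚ) := by exact_mod_cast hh1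
      have e0 : (0:ℚ) ≤ (p:ℚ) := Nat.cast_nonneg p
      have s1 : ((p:ℚ)+2)^2 ≤ (2*(h:ℚ)+2)^2 := by nlinarith
      have A : ((p:ℚ)+1)*(((p:ℚ)+2)^2) ≤ (2*(h:ℚ)+1)*((2*(h:ℚ)+2)^2) :=
        mul_le_mul (by linarith) s1 (by positivity) (by positivity)
      have B1 : (1024:ℚ) ≤ (h:ℚ)^2 := by nlinarith
      have B2 : (32:ℚ)*(h:ℚ)^2 ≤ (h:ℚ)^3 := by nlinarith
      have B3 : (32:ℚ)*(h:ℚ)^3 ≤ (h:ℚ)^4 := by nlinarith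
      have B4 : (1024:ℚ)*(h:ℚ)^3 ≤ (h:ℚ)^5 := by nlinarith
      have B : 3*((2*(h:ℚ)+1)*((2*(h:ℚ)+2)^2)) ≤ (h:ℚ)^5 := by nlinarith
      nlinarith
    have hpos : (0:ℚ) < (p:ℚ)+1 := by positivity
    have : ((p:ℚ)+1) * ((542:ℚ)*(((p:ℕ):ℚ)+1+1)^2) ≤ ((p:ℚ)+1) * pp (p+1) := by
      rw [hrec]
      calc ((p:ℚ)+1) * ((542:ℚ)*(((p:ℕ):ℚ)+1+1)^2) ≤ (542:ℚ)*((h:ℚ))^2 * ((h:ℚ)^3/3) := hfin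
      _ ≤ _ := le_trans hS hsum
    have := le_of_mul_le_mul_left this hpos
    push_cast at this ⊢
    linarith

lemma pp_ii : ∀ m : ℕ, 4 ≤ m → ((m:ℚ)+2)^2 ≤ 3 * pp m := by
  intro m hm
  rcases le_or_gt m 63 with h63 | h63
  · rw [pp_eval m h63]
    have := ii_base_nat m (by omega) hm
    exact_mod_cast this
  · have h1 := pp_lb m (by omega)
    have h2 : (63:ℚ) < (m:ℚ) := by exact_mod_cast h63
    have h0 : (0:ℚ) ≤ (m:ℚ) := Nat.cast_nonneg m
    nlinarith

lemma pp0 : pp 0 = 1 := by norm_num [pp]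
lemma pp1 : pp 1 = 1 := by rw [pp_eval 1 (by norm_num)]; norm_num [Lpp]

lemma claimC : ∀ m : ℕ, pp (m+2) ≤ pp (m+1) + 3 * pp m := by
  intro m
  induction m using Nat.strong_induction_on with
  | _ m ih =>
    match m with
    | 0 => rw [pp_eval 2 (by norm_num), pp_eval 1 (by norm_num), pp_eval 0 (by norm_num)]; norm_num [Lpp]
    | 1 => rw [pp_eval 3 (by norm_num), pp_eval 2 (by norm_num), pp_eval 1 (by norm_num)]; norm_num [Lpp]
    | 2 => rw [pp_eval 4 (by norm_num), pp_eval 3 (by norm_num), pp_eval 2 (by norm_num)]; norm_num [Lpp]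
    | 3 => rw [pp_eval 5 (by norm_num), pp_eval 4 (by norm_num), pp_eval 3 (by norm_num)]; norm_num [Lpp]
    | Nat.succ (Nat.succ (Nat.succ (Nat.succ q))) =>
      -- m = q+4
      have E1 := pp_rec (q+5)
      have E2 := pp_rec (q+4)
      have E3 := pp_rec (q+3)
      -- split E1 : range (q+6) = range (q+4) + top two
      rw [Finset.sum_range_succ, Finset.sum_range_succ] at E1
      -- terms: k = q+5 : pp (q+5-(q+5)) = pp 0 ; k = q+4 : pp (q+5-(q+4)) = pp 1
      rw [show q+5-(q+5) = 0 from by omega, show q+5-(q+4) = 1 from by omega, pp0, pp1] at E1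
      -- split E2 top one
      rw [Finset.sum_range_succ] at E2
      rw [show q+4-(q+4) = 0 from by omega, pp0] at E2
      -- termwise bound on Σ_{k ∈ range (q+4)} σ₂(k+1) pp (q+5-k)
      have hterm : ∀ k ∈ Finset.range (q+4), (sigma2 (k+1) : ℚ) * pp (q+5-k)
          ≤ (sigma2 (k+1) : ℚ) * pp (q+4-k) + 3 * ((sigma2 (k+1) : ℚ) * pp (q+3-k)) := by
        intro k hk
        simp only [Finset.mem_range] at hk
        have hC := ih (q+3-k) (by omega)
        rw [show q+3-k+2 = q+5-k from by omega, show q+3-k+1 = q+4-k from by omega] at hC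
        have hs : (0:ℚ) ≤ (sigma2 (k+1) : ℚ) := by positivity
        nlinarith
      have hsum := Finset.sum_le_sum hterm
      rw [Finset.sum_add_distrib, ← Finset.mul_sum, ← E3] at hsum
      have hsig := sigma2_le (q+6)
      have hii := pp_ii (q+4) (by omega)
      have h0 : (0:ℚ) ≤ pp (q+5) := pp_nonneg _
      have h1 : (0:ℚ) ≤ pp (q+4) := pp_nonneg _
      -- combine
      have hq : ((q:ℚ)+5+1) = (q:ℚ)+6 := by ring
      push_cast at E1 E2 E3 hsum hsig hii ⊢
      nlinarith [hsum]

lemma lemF : ∀ m b : ℕ, 2 ≤ m → 2 ≤ b → m+b ≤ 11 → pp (m+b) ≤ pp m * pp b + 24 := by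
  intro m b hm hb hmb
  rw [pp_eval (m+b) (by omega), pp_eval m (by omega), pp_eval b (by omega)]
  have := F_nat m (by omega) b (by omega) hm hb hmb
  exact_mod_cast this

lemma key (n a' b' : ℕ)
    (ih : ∀ m, m < n → ∀ x y : ℕ, x + y = m → 2 ≤ x → 2 ≤ y → 12 ≤ m → pp m < pp x * pp y)
    (hab : (a'+1) + (b'+1) = n) (hb1 : 1 ≤ b') (hba : b'+1 ≤ a'+1) (hn : 64 ≤ n) :
    pp n < pp (a'+1) * pp (b'+1) := by
  obtain rfl : n = a'+b'+2 := by omega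
  have ha31 : 31 ≤ a' := by omega
  have HA := pp_rec a'
  have HB := pp_rec b'
  have HN := pp_rec (a'+b'+1)
  have hpb' : (1:ℚ) ≤ pp b' := pp_ge_one b'
  have hpbpos : (0:ℚ) < pp b' := pp_pos b'
  have hPa := pp_lb (a'+1) (by omega)
  -- split the big sum
  have hsplit : ∑ k ∈ Finset.range (a'+b'+1+1), (sigma2 (k+1):ℚ) * pp (a'+b'+1-k)
      = (∑ k ∈ Finset.range (a'+1), (sigma2 (k+1):ℚ) * pp (a'+b'+1-k))
        + ∑ j ∈ Finset.range (b'+1), (sigma2 (a'+1+j+1):ℚ) * pp (b'-j) := by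
    rw [show a'+b'+1+1 = (a'+1)+(b'+1) from by omega, Finset.sum_range_add]
    congr 1
    refine Finset.sum_congr rfl ?_
    intro j hj
    simp only [Finset.mem_range] at hj
    rw [show a'+b'+1-(a'+1+j) = b'-j from by omega]
  -- Claim 1
  have claim1 : ∑ k ∈ Finset.range (a'+1), (sigma2 (k+1):ℚ) * pp (a'+b'+1-k)
      ≤ (∑ k ∈ Finset.range (a'+1), (sigma2 (k+1):ℚ) * pp (a'-k)) * pp (b'+1)
        + 540 * ((a':ℚ)+1)^2 * pp b' := by
    have hterm : ∀ k ∈ Finset.range (a'+1), (sigma2 (k+1):ℚ) * pp (a'+b'+1-k)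
        ≤ (sigma2 (k+1):ℚ) * pp (a'-k) * pp (b'+1)
          + (if a'+1 ≤ k+10 then 54*((a':ℚ)+1)^2 * pp b' else 0) := by
      intro k hk
      simp only [Finset.mem_range] at hk
      have hsk := sigma2_le (k+1)
      have hsk0 : (0:ℚ) ≤ (sigma2 (k+1):ℚ) := by positivity
      have hk2 : (k:ℚ)+1 ≤ (a':ℚ)+1 := by
        have : (k:ℚ) ≤ (a':ℚ) := by exact_mod_cast Nat.le_of_lt_succ hk
        linarith
      by_cases hbad : a'+1 ≤ k+10
      · rw [if_pos hbad]
        by_cases hm0 : k = a'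
        · have e1 : a'+b'+1-k = b'+1 := by omega
          have e2 : a'-k = 0 := by omega
          rw [e1, e2, pp0]
          have h1 : (0:ℚ) ≤ 54*((a':ℚ)+1)^2 * pp b' := by positivity
          linarith
        · by_cases hm1 : k+1 = a'
          · have e1 : a'+b'+1-k = b'+2 := by omega
            have e2 : a'-k = 1 := by omega
            rw [e1, e2, pp1]
            have hC := claimC b'
            have hq : (0:ℚ) ≤ pp (b'+1) := pp_nonneg _
            push_cast at hsk
            have hs2a : (sigma2 (k+1):ℚ) ≤ 2*((a':ℚ)+1)^2 := by nlinarith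
            have t1 := mul_le_mul_of_nonneg_left hC hsk0
            have t2 : (sigma2 (k+1):ℚ) * (3*pp b') ≤ 2*((a':ℚ)+1)^2*(3*pp b') :=
              mul_le_mul_of_nonneg_right hs2a (by positivity)
            have t3 : (0:ℚ) ≤ ((a':ℚ)+1)^2 * pp b' := by positivity
            nlinarith [t1, t2, t3]
          · have hm2 : 2 ≤ a'-k := by omega
            have hm9 : a'-k ≤ 9 := by omega
            have e1 : a'+b'+1-k = (a'-k)+(b'+1) := by omega
            rw [e1]
            by_cases hsmall : (a'-k)+(b'+1) ≤ 11
            · have hF := lemF (a'-k) (b'+1) hm2 (by omega) hsmall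
              have hq : (0:ℚ) ≤ pp (a'-k) * pp (b'+1) := by
                have h1 := pp_nonneg (a'-k); have h2 := pp_nonneg (b'+1); positivity
              push_cast at hsk
              have hs2a : (sigma2 (k+1):ℚ) ≤ 2*((a':ℚ)+1)^2 := by nlinarith
              have t1 := mul_le_mul_of_nonneg_left hF hsk0
              have t3 : 48*((a':ℚ)+1)^2 ≤ 54*((a':ℚ)+1)^2*pp b' := by
                nlinarith [hpb', sq_nonneg ((a':ℚ)+1)]
              nlinarith [t1, t3]
            · have hIH := ih ((a'-k)+(b'+1)) (by omega) (a'-k) (b'+1) rfl hm2 (by omega) (by omega)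
              have h1 : (0:ℚ) ≤ 54*((a':ℚ)+1)^2 * pp b' := by positivity
              nlinarith
      · rw [if_neg hbad]
        have hm10 : 10 ≤ a'-k := by omega
        have e1 : a'+b'+1-k = (a'-k)+(b'+1) := by omega
        rw [e1]
        have hIH := ih ((a'-k)+(b'+1)) (by omega) (a'-k) (b'+1) rfl (by omega) (by omega) (by omega)
        nlinarith
    have h1 := Finset.sum_le_sum hterm
    rw [Finset.sum_add_distrib] at h1
    have h2 : ∑ k ∈ Finset.range (a'+1), (if a'+1 ≤ k+10 then 54*((a':ℚ)+1)^2 * pp b' else 0)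
        = 540*((a':ℚ)+1)^2 * pp b' := by
      rw [Finset.sum_ite, Finset.sum_const, Finset.sum_const, smul_zero, add_zero]
      have hf : Finset.filter (fun k => a'+1 ≤ k+10) (Finset.range (a'+1)) = Finset.Ico (a'-9) (a'+1) := by
        ext k
        simp only [Finset.mem_filter, Finset.mem_range, Finset.mem_Ico]
        omega
      rw [hf, Nat.card_Ico, show a'+1-(a'-9) = 10 from by omega]
      rw [nsmul_eq_mul]
      push_cast
      ring
    have h3 : ∑ k ∈ Finset.range (a'+1), (sigma2 (k+1):ℚ) * pp (a'-k) * pp (b'+1)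
        = (∑ k ∈ Finset.range (a'+1), (sigma2 (k+1):ℚ) * pp (a'-k)) * pp (b'+1) := by
      rw [Finset.sum_mul]
    rw [h2, h3] at h1
    exact h1
  -- Claim 2
  have claim2 : ∑ j ∈ Finset.range (b'+1), (sigma2 (a'+1+j+1):ℚ) * pp (b'-j)
      ≤ (∑ j ∈ Finset.range (b'+1), (sigma2 (j+1):ℚ) * pp (b'-j)) * pp (a'+1)
        - (pp (a'+1) - 2*((a':ℚ)+2)^2) * pp b' := by
    rw [Finset.sum_range_succ', Finset.sum_range_succ']
    have hsig1 : sigma2 1 = 1 := by decide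
    have e0 : b'-0 = b' := by omega
    rw [e0, hsig1]
    have hterm : ∀ j ∈ Finset.range b', (sigma2 (a'+1+(j+1)+1):ℚ) * pp (b'-(j+1))
        ≤ (sigma2 ((j+1)+1):ℚ) * pp (b'-(j+1)) * pp (a'+1) := by
      intro j hj
      have hs1 := sigma2_le (a'+j+3)
      have hs2 := sigma2_ge (j+2) (by omega)
      have hpp := pp_nonneg (b'-(j+1))
      have hPa2 : 2*((a':ℚ)+2)^2 ≤ pp (a'+1) := by
        have : ((a'+1:ℕ):ℚ)+1 = (a':ℚ)+2 := by push_cast; ring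
        rw [this] at hPa
        nlinarith [sq_nonneg ((a':ℚ)+2)]
      have e1 : a'+1+(j+1)+1 = a'+j+3 := by omega
      rw [e1]
      have e2 : ((a'+j+3:ℕ):ℚ) = (a':ℚ)+(j:ℚ)+3 := by push_cast; ring
      have e3 : ((j+2:ℕ):ℚ) = (j:ℚ)+2 := by push_cast; ring
      rw [e2] at hs1
      rw [e3] at hs2
      have ha0 : (0:ℚ) ≤ (a':ℚ) := Nat.cast_nonneg a'
      have hj0 : (0:ℚ) ≤ (j:ℚ) := Nat.cast_nonneg j
      have key1 : 2*((a':ℚ)+(j:ℚ)+3)^2 ≤ 2*((a':ℚ)+2)^2 * ((j:ℚ)+2)^2 := by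
        have t : (a':ℚ)+(j:ℚ)+3 ≤ ((a':ℚ)+2)*((j:ℚ)+2) := by nlinarith
        have t2 := mul_le_mul t t (by positivity : (0:ℚ) ≤ (a':ℚ)+(j:ℚ)+3) (by positivity)
        nlinarith [t2]
      have e4 : (j+1+1 : ℕ) = j+2 := by omega
      rw [e4]
      nlinarith [mul_le_mul hPa2 hs2 (by positivity) (pp_nonneg (a'+1)),
        pp_pos (a'+1)]
    have hsum := Finset.sum_le_sum hterm
    have hs3 := sigma2_le (a'+2)
    have e5 : a'+1+0+1 = a'+2 := by omega
    rw [e5]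
    have e6 : ((a'+2:ℕ):ℚ) = (a':ℚ)+2 := by push_cast; ring
    rw [e6] at hs3
    have hsum2 : ∑ j ∈ Finset.range b', (sigma2 ((j+1)+1):ℚ) * pp (b'-(j+1)) * pp (a'+1)
        = (∑ j ∈ Finset.range b', (sigma2 ((j+1)+1):ℚ) * pp (b'-(j+1))) * pp (a'+1) := by
      rw [Finset.sum_mul]
    rw [hsum2] at hsum
    have hP0 : (0:ℚ) < pp (a'+1) := pp_pos _
    have t4 := mul_le_mul_of_nonneg_right hs3 (le_of_lt hpbpos)
    push_cast
    nlinarith [hsum, t4]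
  -- combine everything
  have hcomb : ((a'+b'+1:ℕ):ℚ)+1 = ((a':ℚ)+1) + ((b':ℚ)+1) := by push_cast; ring
  rw [hsplit] at HN
  have hNpos : (0:ℚ) < ((a'+b'+1:ℕ):ℚ)+1 := by positivity
  have hPa2 : 542*((a':ℚ)+2)^2 ≤ pp (a'+1) := by
    have e : ((a'+1:ℕ):ℚ)+1 = (a':ℚ)+2 := by push_cast; ring
    rw [e] at hPa
    exact hPa
  have ha0 : (0:ℚ) ≤ (a':ℚ) := Nat.cast_nonneg a'
  rw [← HA] at claim1
  rw [← HB] at claim2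
  have hcoef : 540*((a':ℚ)+1)^2 + 2*((a':ℚ)+2)^2 - pp (a'+1) ≤ -(1080*(a':ℚ)+1620) := by
    nlinarith [hPa2]
  have hprod : (540*((a':ℚ)+1)^2 + 2*((a':ℚ)+2)^2 - pp (a'+1)) * pp b'
      ≤ (-(1080*(a':ℚ)+1620)) * pp b' := mul_le_mul_of_nonneg_right hcoef hpbpos.le
  have hneg : (-(1080*(a':ℚ)+1620)) * pp b' < 0 :=
    mul_neg_of_neg_of_pos (by nlinarith) hpbpos
  have hfinal : (((a'+b'+1:ℕ):ℚ)+1) * pp (a'+b'+2)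
      < (((a'+b'+1:ℕ):ℚ)+1) * (pp (a'+1) * pp (b'+1)) := by
    rw [show a'+b'+2 = a'+b'+1+1 from rfl, HN, hcomb]
    nlinarith [claim1, claim2, hprod, hneg]
  have := lt_of_mul_lt_mul_left hfinal (le_of_lt hNpos)
  exact this

lemma main1 : ∀ n : ℕ, ∀ a b : ℕ, a + b = n → 2 ≤ a → 2 ≤ b → 12 ≤ n → pp n < pp a * pp b := by
  intro n
  induction n using Nat.strong_induction_on with
  | _ n ih =>
    intro a b hab ha hb hn
    rcases le_or_gt n 63 with h63 | h63
    · subst hab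
      rw [pp_eval (a+b) (by omega), pp_eval a (by omega), pp_eval b (by omega)]
      exact_mod_cast base_gt_nat a (by omega) b (by omega) ha hb hn h63
    · have hn64 : 64 ≤ n := by omega
      obtain ⟨a1, rfl⟩ : ∃ t, a = t+1 := ⟨a-1, by omega⟩
      obtain ⟨b1, rfl⟩ : ∃ t, b = t+1 := ⟨b-1, by omega⟩
      rcases le_total (b1+1) (a1+1) with h | h
      · exact key n a1 b1 (fun m hm => ih m hm) hab (by omega) h hn64
      · rw [mul_comm]
        exact key n b1 a1 (fun m hm => ih m hm) (by omega) (by omega) h hn64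

/-- Bessenrodt–Ono inequality for plane partitions: for `a, b ≥ 2` with `a + b ≥ 12`
we have `pp a * pp b > pp (a+b)`, and equality `pp a * pp b = pp (a+b)` never holds
for `a, b ≥ 2`. -/
theorem bessenrodt_ono_plane_partitions :
    (∀ a b : ℕ, 2 ≤ a → 2 ≤ b → 12 ≤ a + b → pp a * pp b > pp (a + b)) ∧
    (∀ a b : ℕ, 2 ≤ a → 2 ≤ b → pp a * pp b ≠ pp (a + b)) := by
  constructor
  · intro a b ha hb hab
    exact main1 (a+b) a b rfl ha hb hab
  · intro a b ha hb
    rcases le_or_gt 12 (a+b) with h | h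
    · exact (main1 (a+b) a b rfl ha hb h).ne'
    · rw [pp_eval a (by omega), pp_eval b (by omega), pp_eval (a+b) (by omega)]
      have := ne_small_nat a (by omega) b (by omega) ha hb (by omega)
      exact_mod_cast this
end

section
/- For every even positive integer n (with n ≥ 2), the sequence σ₂(n)/n is log-concave at n: (σ₂(n)/n)² > (σ₂(n−1)/(n−1)) · (σ₂(n+1)/(n+1)). -/
lemma telescope (N : ℕ) :
    ∑ j ∈ Finset.Icc 1 N, ((1 : ℚ) / j - 1 / (j + 1)) = 1 - 1 / (N + 1) := by
  induction N with
  | zero => simp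
  | succ N ih =>
    rw [Finset.sum_Icc_succ_top (by omega), ih]
    push_cast
    have h1 : ((N : ℚ) + 1) ≠ 0 := by positivity
    have h2 : ((N : ℚ) + 1 + 1) ≠ 0 := by positivity
    field_simp
    ring

lemma sigma2_even_ge (n : ℕ) (hn : 2 ≤ n) (heven : Even n) :
    5 * n ^ 2 ≤ 4 * sigma2 n := by
  have hhalf : 2 * (n / 2) = n := Nat.two_mul_div_two_of_even heven
  have hne : n / 2 ≠ n := by omega
  have hsub : ({n / 2, n} : Finset ℕ) ⊆ n.divisors := by
    intro d hd
    simp only [Finset.mem_insert, Finset.mem_singleton] at hd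
    rcases hd with rfl | rfl
    · exact Nat.mem_divisors.mpr ⟨⟨2, hhalf.symm.trans (by ring)⟩, by omega⟩
    · exact Nat.mem_divisors.mpr ⟨dvd_rfl, by omega⟩
  have hle : ∑ d ∈ ({n / 2, n} : Finset ℕ), d ^ 2 ≤ sigma2 n :=
    Finset.sum_le_sum_of_subset hsub
  rw [Finset.sum_pair hne] at hle
  nlinarith [hle, hhalf]

lemma sigma2_odd_lt (m : ℕ) (hm : Odd m) : (sigma2 m : ℚ) < 5 / 4 * m ^ 2 := by
  have hm0 : m ≠ 0 := by rintro rfl; simp at hm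
  have hm1 : 1 ≤ m := Nat.one_le_iff_ne_zero.mpr hm0
  -- σ₂(m) = m² * ∑_{d | m} 1/d²
  have key : (sigma2 m : ℚ) = (m : ℚ) ^ 2 * ∑ d ∈ m.divisors, (1 : ℚ) / (d : ℚ) ^ 2 := by
    have := Nat.sum_div_divisors m (fun d => ((d : ℚ)) ^ 2)
    rw [sigma2]
    push_cast
    rw [← this, Finset.mul_sum]
    refine Finset.sum_congr rfl fun d hd => ?_
    obtain ⟨hdvd, -⟩ := Nat.mem_divisors.mp hd
    have hd0 : (d : ℚ) ≠ 0 := by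
      have : d ≠ 0 := Nat.pos_of_mem_divisors hd |>.ne'
      exact_mod_cast this
    rw [Nat.cast_div hdvd hd0]
    field_simp
  rw [key]
  have hmq : (0 : ℚ) < (m : ℚ) ^ 2 := by positivity
  have hsum : ∑ d ∈ m.divisors, (1 : ℚ) / (d : ℚ) ^ 2 < 5 / 4 := by
    have h1mem : 1 ∈ m.divisors := Nat.one_mem_divisors.mpr hm0
    rw [← Finset.insert_erase h1mem, Finset.sum_insert (Finset.notMem_erase _ _)]
    have hrest : ∑ d ∈ m.divisors.erase 1, (1 : ℚ) / (d : ℚ) ^ 2 < 1 / 4 := by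
      set S := m.divisors.erase 1 with hS
      have hS3 : ∀ d ∈ S, Odd d ∧ 3 ≤ d ∧ d ≤ m := by
        intro d hd
        have hd1 : d ≠ 1 := Finset.ne_of_mem_erase hd
        have hdm : d ∈ m.divisors := Finset.mem_of_mem_erase hd
        obtain ⟨hdvd, -⟩ := Nat.mem_divisors.mp hdm
        have hodd : Odd d := hm.of_dvd_nat hdvd  -- may need rename
        have hdle : d ≤ m := Nat.le_of_dvd (by omega) hdvd
        have hd0 : 1 ≤ d := Nat.pos_of_mem_divisors hdm
        constructor
        · exact hodd
        · constructor
          · rcases hodd with ⟨k, hk⟩; omega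
          · exact hdle
      -- map d ↦ d / 2
      have hinj : ∀ x ∈ S, ∀ y ∈ S, x / 2 = y / 2 → x = y := by
        intro x hx y hy hxy
        have hox := (hS3 x hx).1
        have hoy := (hS3 y hy).1
        have := Nat.two_mul_div_two_add_one_of_odd hox
        have := Nat.two_mul_div_two_add_one_of_odd hoy
        omega
      have himg : ∑ j ∈ S.image (· / 2), (1 : ℚ) / ((2 * j + 1 : ℕ) : ℚ) ^ 2
          = ∑ d ∈ S, (1 : ℚ) / (d : ℚ) ^ 2 := by
        rw [Finset.sum_image hinj]
        refine Finset.sum_congr rfl fun d hd => ?_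
        rw [Nat.two_mul_div_two_add_one_of_odd (hS3 d hd).1]
      rw [← himg]
      set T := S.image (· / 2) with hT
      have hT1 : ∀ j ∈ T, 1 ≤ j ∧ j ≤ m := by
        intro j hj
        obtain ⟨d, hd, rfl⟩ := Finset.mem_image.mp hj
        obtain ⟨-, h3, hle⟩ := hS3 d hd
        omega
      calc ∑ j ∈ T, (1 : ℚ) / ((2 * j + 1 : ℕ) : ℚ) ^ 2
          ≤ ∑ j ∈ T, (1 / 4) * ((1 : ℚ) / j - 1 / (j + 1)) := by
            refine Finset.sum_le_sum fun j hj => ?_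
            have hj1 : 1 ≤ j := (hT1 j hj).1
            have hjq : (1 : ℚ) ≤ (j : ℚ) := by exact_mod_cast hj1
            have hjp : (0 : ℚ) < (j : ℚ) := by linarith
            push_cast
            have h1 : (1 : ℚ) / (2 * (j : ℚ) + 1) ^ 2 ≤ 1 / (4 * (j : ℚ) * ((j : ℚ) + 1)) := by
              apply one_div_le_one_div_of_le (by positivity)
              nlinarith
            have h2 : (1 : ℚ) / (4 * (j : ℚ) * ((j : ℚ) + 1))
                = 1 / 4 * (1 / (j : ℚ) - 1 / ((j : ℚ) + 1)) := by
              field_simp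
              ring
            linarith
        _ ≤ ∑ j ∈ Finset.Icc 1 m, (1 / 4) * ((1 : ℚ) / j - 1 / (j + 1)) := by
            refine Finset.sum_le_sum_of_subset_of_nonneg ?_ ?_
            · intro j hj
              have := hT1 j hj
              exact Finset.mem_Icc.mpr ⟨this.1, this.2⟩
            · intro j hj hj'
              have hj1 : 1 ≤ j := (Finset.mem_Icc.mp hj).1
              have hjq : (1 : ℚ) ≤ (j : ℚ) := by exact_mod_cast hj1
              have hjp : (0 : ℚ) < (j : ℚ) := by linarith
              have : (1 : ℚ) / (j + 1) ≤ 1 / j :=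
                one_div_le_one_div_of_le hjp (by linarith)
              linarith
        _ = (1 / 4) * (1 - 1 / (m + 1)) := by
            rw [← Finset.mul_sum, telescope]
        _ < 1 / 4 := by
            have : (0 : ℚ) < 1 / ((m : ℚ) + 1) := by positivity
            linarith
    have hone : (1 : ℚ) / ((1 : ℕ) : ℚ) ^ 2 = 1 := by norm_num
    rw [hone]
    linarith
  calc (m : ℚ) ^ 2 * ∑ d ∈ m.divisors, (1 : ℚ) / (d : ℚ) ^ 2
      < (m : ℚ) ^ 2 * (5 / 4) := mul_lt_mul_of_pos_left hsum hmq
    _ = 5 / 4 * (m : ℚ) ^ 2 := by ring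

lemma sigma2_pos (m : ℕ) (hm : m ≠ 0) : 1 ≤ sigma2 m := by
  have h1 : 1 ∈ m.divisors := Nat.one_mem_divisors.mpr hm
  have := Finset.single_le_sum (f := fun d => d ^ 2) (fun d _ => Nat.zero_le _) h1
  simpa [sigma2] using this

/-- For every even positive integer `n`, the sequence `σ₂(n)/n` is log-concave at `n`. -/
theorem sigma2_div_log_concave_even (n : ℕ) (hn : 2 ≤ n) (heven : Even n) :
    ((sigma2 n : ℚ) / n) ^ 2 >
      ((sigma2 (n - 1) : ℚ) / ((n : ℚ) - 1)) * ((sigma2 (n + 1) : ℚ) / ((n : ℚ) + 1)) := by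
  have hodd1 : Odd (n - 1) := by
    rcases heven with ⟨k, hk⟩; exact ⟨k - 1, by omega⟩
  have hodd2 : Odd (n + 1) := Even.add_one heven
  have hs : (5 : ℚ) * (n : ℚ) ^ 2 ≤ 4 * (sigma2 n : ℚ) := by
    have := sigma2_even_ge n hn heven
    exact_mod_cast this
  have hcast : ((n - 1 : ℕ) : ℚ) = (n : ℚ) - 1 := by
    have : (1 : ℕ) ≤ n := by omega
    push_cast [this]; ring
  have ha : (sigma2 (n - 1) : ℚ) < 5 / 4 * ((n : ℚ) - 1) ^ 2 := by
    have := sigma2_odd_lt (n - 1) hodd1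
    rwa [hcast] at this
  have hb : (sigma2 (n + 1) : ℚ) < 5 / 4 * ((n : ℚ) + 1) ^ 2 := by
    have := sigma2_odd_lt (n + 1) hodd2
    push_cast at this ⊢
    linarith
  have hapos : (0 : ℚ) ≤ (sigma2 (n - 1) : ℚ) := by positivity
  have hbpos : (0 : ℚ) ≤ (sigma2 (n + 1) : ℚ) := by positivity
  have hnq : (2 : ℚ) ≤ (n : ℚ) := by exact_mod_cast hn
  have hd1 : (0 : ℚ) < (n : ℚ) - 1 := by linarith
  have hd2 : (0 : ℚ) < (n : ℚ) + 1 := by linarith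
  have hnp : (0 : ℚ) < (n : ℚ) := by linarith
  rw [gt_iff_lt, div_mul_div_comm, div_pow, div_lt_div_iff₀ (by positivity) (by positivity)]
  -- goal : a * b * n^2 < s^2 * ((n-1)*(n+1))
  have hab : (sigma2 (n - 1) : ℚ) * (sigma2 (n + 1) : ℚ)
      < (5 / 4 * ((n : ℚ) - 1) ^ 2) * (5 / 4 * ((n : ℚ) + 1) ^ 2) :=
    mul_lt_mul'' ha hb hapos hbpos
  have hs2 : (5 / 4 * (n : ℚ) ^ 2) ^ 2 ≤ (sigma2 n : ℚ) ^ 2 := by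
    have h0 : (0 : ℚ) ≤ 5 / 4 * (n : ℚ) ^ 2 := by positivity
    have h1 : 5 / 4 * (n : ℚ) ^ 2 ≤ (sigma2 n : ℚ) := by linarith
    exact pow_le_pow_left₀ h0 h1 2
  nlinarith [hab, hs2, sq_nonneg ((n : ℚ) ^ 2 - 1), hnq, hnp]
end

section
/- For every real constant C₁ > 0 there exists N > 0 such that for all integers n > N: 1 + (C₁/9) · n^{−4/3} < exp(2·C₁·n^{2/3} − C₁·(n+1)^{2/3} − C₁·(n−1)^{2/3}) < 1 + (4·C₁/9) · n^{−4/3}. -/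
/-!
The exponent is `-C₁ Δ(n)`, where `Δ(n) = (n+1)^{2/3} + (n-1)^{2/3} - 2n^{2/3}` is the second
difference of `x^{2/3}`. Scaling by `n` gives `Δ(n) = n^{2/3} ((1+1/n)^{2/3} + (1-1/n)^{2/3} - 2)`,
and the symmetric second difference quotient of a `C²` function tends to its second derivative,
so `n^{4/3} Δ(n) → (2/3)(2/3 - 1) = -2/9`. Since `exp t - 1 ~ t`, also
`n^{4/3} (exp(-C₁ Δ(n)) - 1) → 2C₁/9`, which lies strictly between `C₁/9` and `4C₁/9`.
-/

open Real Filter Set Topology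

theorem tendsto_symmetric_second_difference_div_sq {f f' f'' : ℝ → ℝ} {a : ℝ}
    (hf : ∀ᶠ x in 𝓝 a, HasDerivAt f (f' x) x) (hf' : ∀ᶠ x in 𝓝 a, HasDerivAt f' (f'' x) x)
    (hf'' : ContinuousAt f'' a) :
    Tendsto (fun h => (f (a + h) + f (a - h) - 2 * f a) / h ^ 2) (𝓝[≠] 0) (𝓝 (f'' a)) := by
  have hadd : Tendsto (a + ·) (𝓝[≠] 0) (𝓝 a) := by
    simpa using ((continuous_const_add a).tendsto 0).mono_left nhdsWithin_le_nhds
  have hsub : Tendsto (a - ·) (𝓝[≠] 0) (𝓝 a) := by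
    simpa using ((continuous_sub_left a).tendsto 0).mono_left nhdsWithin_le_nhds
  have hshift {g g' : ℝ → ℝ} (hg : ∀ᶠ x in 𝓝 a, HasDerivAt g (g' x) x) :
      ∀ᶠ h in 𝓝[≠] 0, HasDerivAt (fun h => g (a + h)) (g' (a + h)) h ∧
        HasDerivAt (fun h => g (a - h)) (-g' (a - h)) h :=
    (hadd.eventually hg).and (hsub.eventually hg) |>.mono fun h ⟨h₁, h₂⟩ =>
      ⟨h₁.comp_const_add a h, h₂.comp_const_sub a h⟩
  have hcont {g : ℝ → ℝ} (hg : ContinuousAt g a) :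
      Tendsto (fun h => g (a + h)) (𝓝[≠] 0) (𝓝 (g a)) ∧
        Tendsto (fun h => g (a - h)) (𝓝[≠] 0) (𝓝 (g a)) :=
    ⟨hg.tendsto.comp hadd, hg.tendsto.comp hsub⟩
  have hsq : Tendsto (fun h : ℝ => h ^ 2) (𝓝[≠] 0) (𝓝 0) := by
    simpa using ((continuous_pow 2).tendsto (0 : ℝ)).mono_left nhdsWithin_le_nhds
  have hlin : Tendsto (fun h : ℝ => 2 * h) (𝓝[≠] 0) (𝓝 0) := by
    simpa using ((continuous_const_mul (2 : ℝ)).tendsto 0).mono_left nhdsWithin_le_nhds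
  obtain ⟨hf_add, hf_sub⟩ := hcont hf.self_of_nhds.continuousAt
  obtain ⟨hf'_add, hf'_sub⟩ := hcont hf'.self_of_nhds.continuousAt
  obtain ⟨hf''_add, hf''_sub⟩ := hcont hf''
  refine HasDerivAt.lhopital_zero_nhdsNE (f' := fun h => f' (a + h) - f' (a - h))
    (g' := fun h => 2 * h) ?_ ?_ ?_ ?_ hsq ?_
  · filter_upwards [hshift hf] with h ⟨h₁, h₂⟩
    exact ((h₁.add h₂).sub_const (2 * f a)).congr_deriv (sub_eq_add_neg _ _).symm
  · filter_upwards with h using by simpa using hasDerivAt_pow 2 h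
  · filter_upwards [self_mem_nhdsWithin] with h hh using mul_ne_zero two_ne_zero hh
  · simpa [two_mul] using (hf_add.add hf_sub).sub_const (2 * f a)
  refine HasDerivAt.lhopital_zero_nhdsNE (f' := fun h => f'' (a + h) + f'' (a - h))
    (g' := fun _ => 2) ?_ ?_ ?_ ?_ hlin ?_
  · filter_upwards [hshift hf'] with h ⟨h₁, h₂⟩
    exact (h₁.sub h₂).congr_deriv (sub_neg_eq_add _ _)
  · filter_upwards with h using by simpa using (hasDerivAt_id h).const_mul (2 : ℝ)
  · exact Eventually.of_forall fun _ => two_ne_zero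
  · simpa using hf'_add.sub hf'_sub
  · simpa using (hf''_add.add hf''_sub).div_const 2

theorem tendsto_one_add_rpow_add_one_sub_rpow_sub_two_div_sq (p : ℝ) :
    Tendsto (fun h => ((1 + h) ^ p + (1 - h) ^ p - 2) / h ^ 2) (𝓝[≠] 0) (𝓝 (p * (p - 1))) := by
  have hderiv (q : ℝ) : ∀ᶠ x in 𝓝 (1 : ℝ), HasDerivAt (· ^ q) (q * x ^ (q - 1)) x :=
    (eventually_ne_nhds one_ne_zero).mono fun x hx => hasDerivAt_rpow_const (Or.inl hx)
  have hf'' : ContinuousAt (fun x : ℝ => p * ((p - 1) * x ^ (p - 1 - 1))) 1 :=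
    (continuousAt_rpow_const 1 _ (Or.inl one_ne_zero)).const_mul _ |>.const_mul _
  have := tendsto_symmetric_second_difference_div_sq (hderiv p)
    ((hderiv (p - 1)).mono fun x hx => hx.const_mul p) hf''
  simpa using this

theorem tendsto_rpow_mul_second_difference_rpow (p : ℝ) :
    Tendsto (fun x : ℝ => x ^ (2 - p) * ((x + 1) ^ p + (x - 1) ^ p - 2 * x ^ p)) atTop
      (𝓝 (p * (p - 1))) := by
  have hinv : Tendsto (fun x : ℝ => x⁻¹) atTop (𝓝[≠] 0) :=
    tendsto_inv_atTop_nhdsGT_zero.mono_right (nhdsWithin_mono _ fun _ hx => ne_of_gt hx)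
  refine ((tendsto_one_add_rpow_add_one_sub_rpow_sub_two_div_sq p).comp hinv).congr' ?_
  filter_upwards [eventually_ge_atTop 1] with x hx
  have hx₀ : 0 < x := one_pos.trans_le hx
  have hscale (s : ℝ) (hs : 0 ≤ 1 + s * x⁻¹) : (x + s) ^ p = x ^ p * (1 + s * x⁻¹) ^ p := by
    rw [← mul_rpow hx₀.le hs]
    congr 1
    field_simp
  have hpow : x ^ (2 - p) * x ^ p = x ^ 2 := by
    rw [← rpow_add hx₀, sub_add_cancel, rpow_two]
  have hle : x⁻¹ ≤ 1 := inv_le_one_of_one_le₀ hx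
  rw [sub_eq_add_neg x 1, hscale 1 (by positivity), hscale (-1) (by linarith)]
  simp only [Function.comp_apply, one_mul, neg_one_mul, ← sub_eq_add_neg, div_eq_mul_inv,
    inv_pow, inv_inv]
  linear_combination (2 - (1 + x⁻¹) ^ p - (1 - x⁻¹) ^ p) * hpow

theorem tendsto_exp_sub_one_mul {α : Type*} {l : Filter α} {u v : α → ℝ} {L : ℝ}
    (hv : Tendsto v l atTop) (huv : Tendsto (fun x => u x * v x) l (𝓝 L)) :
    Tendsto (fun x => (exp (u x) - 1) * v x) l (𝓝 L) := by
  have hu : Tendsto u l (𝓝 0) := by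
    have := huv.mul hv.inv_tendsto_atTop
    rw [mul_zero] at this
    refine this.congr' ?_
    filter_upwards [hv.eventually_ne_atTop 0] with x hx
    simp [hx]
  -- `exp t - 1 = t * dslope exp 0 t` also at `t = 0`, so `u` may vanish
  have hslope : Tendsto (fun x => dslope exp 0 (u x)) l (𝓝 1) := by
    have := (continuousAt_dslope_same.2 (differentiableAt_exp (x := 0))).tendsto.comp hu
    rwa [dslope_same, Real.deriv_exp, exp_zero] at this
  refine (one_mul L ▸ hslope.mul huv).congr fun x => ?_
  have := sub_smul_dslope exp 0 (u x)
  rw [sub_zero, smul_eq_mul, exp_zero] at this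
  simp only [← this]
  ring

theorem exists_pos_forall_lt_of_tendsto_mul {w v : ℕ → ℝ} {a b L : ℝ}
    (h : Tendsto (fun n => w n * v n) atTop (𝓝 L)) (hv : ∀ᶠ n in atTop, 0 < v n)
    (ha : a < L) (hb : L < b) :
    ∃ N : ℕ, 0 < N ∧ ∀ n : ℕ, N < n → a * (v n)⁻¹ < w n ∧ w n < b * (v n)⁻¹ := by
  obtain ⟨N, hN⟩ := eventually_atTop.1 <| (h.eventually (Ioo_mem_nhds ha hb)).and hv
  refine ⟨N + 1, N.succ_pos, fun n hn => ?_⟩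
  obtain ⟨⟨hlo, hhi⟩, hvn⟩ := hN n (by omega)
  rw [← div_eq_mul_inv, ← div_eq_mul_inv]
  exact ⟨(div_lt_iff₀ hvn).2 hlo, (lt_div_iff₀ hvn).2 hhi⟩

/-- For every real `C₁ > 0` there is `N > 0` such that for all integers `n > N`, the quantity
`exp (2C₁n^(2/3) − C₁(n+1)^(2/3) − C₁(n−1)^(2/3))` lies strictly between
`1 + (C₁/9)·n^(−4/3)` and `1 + (4C₁/9)·n^(−4/3)`. -/
theorem exp_concavity_bounds (C₁ : ℝ) (hC₁ : 0 < C₁) :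
    ∃ N : ℕ, 0 < N ∧ ∀ n : ℕ, N < n →
      1 + C₁ / 9 * (n : ℝ) ^ (-(4 : ℝ) / 3) <
        Real.exp (2 * C₁ * (n : ℝ) ^ ((2 : ℝ) / 3) - C₁ * ((n : ℝ) + 1) ^ ((2 : ℝ) / 3)
          - C₁ * ((n : ℝ) - 1) ^ ((2 : ℝ) / 3)) ∧
      Real.exp (2 * C₁ * (n : ℝ) ^ ((2 : ℝ) / 3) - C₁ * ((n : ℝ) + 1) ^ ((2 : ℝ) / 3)
          - C₁ * ((n : ℝ) - 1) ^ ((2 : ℝ) / 3)) <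
        1 + 4 * C₁ / 9 * (n : ℝ) ^ (-(4 : ℝ) / 3) := by
  set u : ℕ → ℝ := fun n => 2 * C₁ * (n : ℝ) ^ ((2 : ℝ) / 3) - C₁ * ((n : ℝ) + 1) ^ ((2 : ℝ) / 3)
    - C₁ * ((n : ℝ) - 1) ^ ((2 : ℝ) / 3)
  set v : ℕ → ℝ := fun n => (n : ℝ) ^ ((4 : ℝ) / 3)
  have hv : Tendsto v atTop atTop :=
    (tendsto_rpow_atTop (by norm_num)).comp tendsto_natCast_atTop_atTop
  have huv : Tendsto (fun n => u n * v n) atTop (𝓝 (2 * C₁ / 9)) := by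
    have := ((tendsto_rpow_mul_second_difference_rpow (2 / 3)).comp
      tendsto_natCast_atTop_atTop).const_mul (-C₁)
    convert this using 2 with n <;> norm_num [u, v] <;> ring
  obtain ⟨N, hN, hbounds⟩ := exists_pos_forall_lt_of_tendsto_mul
    (tendsto_exp_sub_one_mul hv huv) (hv.eventually_gt_atTop 0)
    (by linarith : C₁ / 9 < 2 * C₁ / 9) (by linarith : 2 * C₁ / 9 < 4 * C₁ / 9)
  refine ⟨N, hN, fun n hn => ?_⟩
  rw [neg_div, rpow_neg (Nat.cast_nonneg n)]
  constructor <;> linarith [hbounds n hn]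
end

section
/- Let C₁, C₂, C₃ > 0 and r, γ₁, γ₂ ∈ ℝ be real constants, let β(n) = C₂ · n^r · exp(C₁ · n^{2/3}), and let α : ℕ → ℝ be a sequence such that |α(n)/β(n) − 1 − γ₁·n^{−2/3} − γ₂·n^{−4/3}| ≤ C₃ · n^{−2} for all n > N₀ for some N₀. Then there exists N ≥ N₀ such that α is log-concave for n > N, i.e. α(n)² > α(n−1) · α(n+1) for all integers n > N. -/
/-! `log α n = log C₂ + r log n + C₁ n^(2/3) + log (α n / β n)`, and with `t = n^(-2/3)` the
hypothesis reads `α / β = 1 + γ₁ t + γ₂ t² + O(t³)`, so expanding the logarithm gives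
`log (α / β) = γ₁ t + (γ₂ - γ₁²/2) t² + O(n⁻²)`. By the mean value theorem the central second
difference of `n ^ a` is `a (a - 1) ξ ^ (a - 2)` for some `ξ` within `1` of `n`, hence of exact
order `n ^ (a - 2)`, and that of `log n` is `O(n⁻²)`. So in the second difference of `log α` every
term is `O(n⁻²)` except the one from `C₁ n^(2/3)`, which is negative of exact order `n^(-4/3)`;
thus the second difference of `log α` is eventually negative, which is log-concavity. -/

open Real Filter Asymptotics Topology Set

theorem exists_centralSecondDiff_eq_sq_mul {f f' f'' : ℝ → ℝ} {x h : ℝ} (hh : 0 < h)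
    (hf : ∀ y ∈ Icc (x - h) (x + h), HasDerivAt f (f' y) y)
    (hf' : ∀ y ∈ Icc (x - h) (x + h), HasDerivAt f' (f'' y) y) :
    ∃ ξ ∈ Ioo (x - h) (x + h), f (x - h) + f (x + h) - 2 * f x = h ^ 2 * f'' ξ := by
  have hg : ∀ s ∈ Icc 0 h, HasDerivAt (fun s => f (x + s) - f (x - h + s))
      (f' (x + s) - f' (x - h + s)) s := fun s ⟨hs0, hsh⟩ =>
    ((hf _ ⟨by linarith, by linarith⟩).comp_const_add x s).sub
      ((hf _ ⟨by linarith, by linarith⟩).comp_const_add (x - h) s)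
  obtain ⟨c, ⟨hc0, hch⟩, hc⟩ := exists_hasDerivAt_eq_slope _ _ hh
    (fun s hs => (hg s hs).continuousAt.continuousWithinAt)
    (fun s hs => hg s (Ioo_subset_Icc_self hs))
  obtain ⟨ξ, ⟨hξ₁, hξ₂⟩, hξ⟩ := exists_hasDerivAt_eq_slope f' f''
    (show x - h + c < x + c by linarith)
    (fun y hy => (hf' y ⟨by linarith [hy.1], by linarith [hy.2]⟩).continuousAt.continuousWithinAt)
    (fun y hy => hf' y ⟨by linarith [hy.1], by linarith [hy.2]⟩)
  refine ⟨ξ, ⟨by linarith, by linarith⟩, ?_⟩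
  rw [hξ, hc, show x + c - (x - h + c) = h by ring, sub_add_cancel, add_zero, add_zero, sub_zero]
  field_simp
  ring

-- `n - 1` truncates at `n = 0`; only the behaviour for large `n` matters.
def secondDiff (f : ℕ → ℝ) (n : ℕ) : ℝ := f (n - 1) + f (n + 1) - 2 * f n

theorem exists_secondDiff_natCast_eq {f f' f'' : ℝ → ℝ} {n : ℕ} (hn : 2 ≤ n)
    (hf : ∀ y > 0, HasDerivAt f (f' y) y) (hf' : ∀ y > 0, HasDerivAt f' (f'' y) y) :
    ∃ ξ ∈ Ioo ((n : ℝ) - 1) (n + 1), secondDiff (fun k => f k) n = f'' ξ := by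
  have h2 : (2 : ℝ) ≤ n := by exact_mod_cast hn
  obtain ⟨ξ, hξ, h⟩ := exists_centralSecondDiff_eq_sq_mul one_pos
    (fun y hy => hf y (by linarith [hy.1])) (fun y hy => hf' y (by linarith [hy.1]))
  refine ⟨ξ, hξ, ?_⟩
  rw [secondDiff, Nat.cast_sub (by omega : 1 ≤ n)]
  push_cast
  rw [h, one_pow, one_mul]

theorem exists_secondDiff_rpow_eq (a : ℝ) {n : ℕ} (hn : 2 ≤ n) :
    ∃ ξ ∈ Ioo ((n : ℝ) - 1) (n + 1),
      secondDiff (fun k => (k : ℝ) ^ a) n = a * (a - 1) * ξ ^ (a - 2) := by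
  obtain ⟨ξ, hξ, h⟩ := exists_secondDiff_natCast_eq (f := fun y => y ^ a) hn
    (fun y hy => hasDerivAt_rpow_const (Or.inl hy.ne'))
    (fun y hy => (hasDerivAt_rpow_const (Or.inl hy.ne')).const_mul a)
  refine ⟨ξ, hξ, ?_⟩
  rw [h, sub_sub, one_add_one_eq_two, mul_assoc]

theorem exists_secondDiff_log_eq {n : ℕ} (hn : 2 ≤ n) :
    ∃ ξ ∈ Ioo ((n : ℝ) - 1) (n + 1), secondDiff (fun k => log k) n = -ξ ^ (-2 : ℝ) := by
  obtain ⟨ξ, hξ, h⟩ := exists_secondDiff_natCast_eq (f := log) hn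
    (fun y hy => hasDerivAt_log hy.ne') (fun y hy => hasDerivAt_inv hy.ne')
  have h2 : (2 : ℝ) ≤ n := by exact_mod_cast hn
  refine ⟨ξ, hξ, ?_⟩
  rw [h, rpow_neg (by linarith [hξ.1]), rpow_two]

theorem isTheta_rpow_of_abs_sub_le {ξ : ℕ → ℝ} {C : ℝ} (h : ∀ᶠ n in atTop, |ξ n - n| ≤ C)
    (b : ℝ) : (fun n => ξ n ^ b) =Θ[atTop] fun n : ℕ => (n : ℝ) ^ b := by
  have hequiv : ξ ~[atTop] fun n : ℕ => (n : ℝ) := by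
    refine IsLittleO.isEquivalent ?_
    have hbdd : (ξ - fun n : ℕ => (n : ℝ)) =O[atTop] fun _ => (1 : ℝ) :=
      IsBigO.of_bound C (by filter_upwards [h] with n hn; simpa using hn)
    exact hbdd.trans_isLittleO
      ((isLittleO_const_id_atTop (1 : ℝ)).comp_tendsto tendsto_natCast_atTop_atTop)
  have hξ : ∀ᶠ n in atTop, 0 ≤ ξ n := by
    filter_upwards [h, eventually_ge_atTop ⌈C⌉₊] with n hn hCn
    linarith [(abs_le.1 hn).1, Nat.ceil_le.1 hCn]
  exact hequiv.isTheta.rpow hξ (.of_forall fun n => Nat.cast_nonneg n)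

theorem isLittleO_natCast_rpow_rpow {a b : ℝ} (h : a < b) :
    (fun n : ℕ => (n : ℝ) ^ a) =o[atTop] fun n : ℕ => (n : ℝ) ^ b := by
  have hsmall : (fun n : ℕ => (n : ℝ) ^ (a - b)) =o[atTop] fun _ => (1 : ℝ) := by
    rw [isLittleO_one_iff, ← neg_sub]
    exact (tendsto_rpow_neg_atTop (sub_pos.2 h)).comp tendsto_natCast_atTop_atTop
  refine (hsmall.mul_isBigO (isBigO_refl (fun n : ℕ => (n : ℝ) ^ b) atTop)).congr' ?_
    (.of_forall fun n => one_mul _)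
  filter_upwards [eventually_gt_atTop 0] with n hn
  rw [← rpow_add (Nat.cast_pos.2 hn), sub_add_cancel]

theorem isTheta_rpow_of_eventually_eq_mul_rpow {f : ℕ → ℝ} {c b : ℝ} (hc : c ≠ 0)
    (h : ∀ᶠ n : ℕ in atTop, ∃ ξ ∈ Ioo ((n : ℝ) - 1) (n + 1), f n = c * ξ ^ b) :
    f =Θ[atTop] fun n : ℕ => (n : ℝ) ^ b := by
  obtain ⟨N, hN⟩ := eventually_atTop.1 h
  choose! ξ hξ hf using hN
  have hclose : ∀ᶠ n in atTop, |ξ n - n| ≤ 1 := by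
    filter_upwards [eventually_ge_atTop N] with n hn
    have := hξ n hn
    exact abs_le.2 ⟨by linarith [this.1], by linarith [this.2]⟩
  refine EventuallyEq.trans_isTheta ?_
    ((isTheta_const_mul_left hc).2 (isTheta_rpow_of_abs_sub_le hclose b))
  filter_upwards [eventually_ge_atTop N] with n hn using hf n hn

theorem isTheta_secondDiff_rpow {a : ℝ} (ha₀ : a ≠ 0) (ha₁ : a ≠ 1) :
    secondDiff (fun n => (n : ℝ) ^ a) =Θ[atTop] fun n : ℕ => (n : ℝ) ^ (a - 2) :=
  isTheta_rpow_of_eventually_eq_mul_rpow (mul_ne_zero ha₀ (sub_ne_zero.2 ha₁))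
    (by filter_upwards [eventually_ge_atTop 2] with n hn using exists_secondDiff_rpow_eq a hn)

theorem isBigO_secondDiff_log :
    secondDiff (fun n => log n) =O[atTop] fun n : ℕ => (n : ℝ) ^ (-2 : ℝ) :=
  (isTheta_rpow_of_eventually_eq_mul_rpow (neg_ne_zero.2 one_ne_zero) (by
    filter_upwards [eventually_ge_atTop 2] with n hn
    simpa only [neg_one_mul] using exists_secondDiff_log_eq hn)).isBigO

theorem eventually_secondDiff_rpow_neg {a : ℝ} (ha₀ : 0 < a) (ha₁ : a < 1) :
    ∀ᶠ n in atTop, secondDiff (fun n => (n : ℝ) ^ a) n < 0 := by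
  filter_upwards [eventually_ge_atTop 2] with n hn
  obtain ⟨ξ, ⟨hξ, -⟩, h⟩ := exists_secondDiff_rpow_eq a hn
  have : (2 : ℝ) ≤ n := by exact_mod_cast hn
  rw [h]
  exact mul_neg_of_neg_of_pos (mul_neg_of_pos_of_neg ha₀ (by linarith))
    (rpow_pos_of_pos (by linarith) _)

theorem Asymptotics.IsBigO.secondDiff {f : ℕ → ℝ} {b : ℝ}
    (h : f =O[atTop] fun n : ℕ => (n : ℝ) ^ b) :
    _root_.secondDiff f =O[atTop] fun n : ℕ => (n : ℝ) ^ b := by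
  have shift : ∀ k : ℕ → ℕ, Tendsto k atTop atTop → (∀ᶠ n in atTop, |(k n : ℝ) - n| ≤ 1) →
      (fun n => f (k n)) =O[atTop] fun n : ℕ => (n : ℝ) ^ b := fun k hk hk₁ =>
    (h.comp_tendsto hk).trans (isTheta_rpow_of_abs_sub_le hk₁ b).isBigO
  refine ((shift _ (tendsto_sub_atTop_nat 1) ?_).add (shift _ (tendsto_add_atTop_nat 1) ?_)).sub
    (h.const_mul_left 2)
  · filter_upwards [eventually_ge_atTop 1] with n hn
    rw [Nat.cast_sub hn]; norm_num
  · exact .of_forall fun n => by push_cast; norm_num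

theorem Filter.EventuallyEq.secondDiff {f g : ℕ → ℝ} (h : f =ᶠ[atTop] g) :
    _root_.secondDiff f =ᶠ[atTop] _root_.secondDiff g := by
  filter_upwards [h, (tendsto_sub_atTop_nat 1).eventually h,
    (tendsto_add_atTop_nat 1).eventually h] with n h₀ hprev hnext
  simp only [_root_.secondDiff, h₀, hprev, hnext]

theorem secondDiff_const_mul_add (c : ℝ) (f g : ℕ → ℝ) :
    secondDiff (fun n => c * f n + g n) = fun n => c * secondDiff f n + secondDiff g n := by
  funext n
  simp only [secondDiff]
  ring

theorem isBigO_log_one_add_sub_add_sq :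
    (fun u : ℝ => log (1 + u) - (u - u ^ 2 / 2)) =O[𝓝 0] fun u => u ^ 3 := by
  refine IsBigO.of_bound 2 ?_
  filter_upwards [Metric.ball_mem_nhds (0 : ℝ) (by norm_num : (0 : ℝ) < 1 / 2)] with u hu
  rw [Metric.mem_ball, dist_zero_right, norm_eq_abs] at hu
  have htaylor := abs_log_sub_add_sum_range_le (x := -u) (by rw [abs_neg]; linarith) 2
  rw [abs_neg, sub_neg_eq_add] at htaylor
  simp only [Finset.sum_range_succ, Finset.sum_range_zero] at htaylor
  rw [norm_eq_abs, norm_eq_abs, abs_pow]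
  calc |log (1 + u) - (u - u ^ 2 / 2)| ≤ |u| ^ 3 / (1 - |u|) := by
        convert htaylor using 2; push_cast; ring
    _ ≤ 2 * |u| ^ 3 := by
        rw [div_le_iff₀ (by linarith)]
        nlinarith [pow_nonneg (abs_nonneg u) 3]

section Expansion

variable {ι : Type*} {l : Filter ι} {t u : ι → ℝ} {a b : ℝ}

theorem Filter.Tendsto.isBigO_pow_of_le (ht : Tendsto t l (𝓝 0)) {m n : ℕ} (h : m ≤ n) :
    (fun i => t i ^ n) =O[l] fun i => t i ^ m := by
  refine ((isBigO_refl (fun i => t i ^ m) l).mul ((ht.pow (n - m)).isBigO_one ℝ)).congr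
    (fun i => ?_) (fun i => mul_one _)
  rw [← pow_add, Nat.add_sub_cancel' h]

theorem isBigO_of_isBigO_sub_linear_add_sq (ht : Tendsto t l (𝓝 0))
    (hu : (fun i => u i - (a * t i + b * t i ^ 2)) =O[l] fun i => t i ^ 3) : u =O[l] t := by
  have hsq : (fun i => t i ^ 2) =O[l] t := by
    simpa using ht.isBigO_pow_of_le (by norm_num : 1 ≤ 2)
  have hcube : (fun i => t i ^ 3) =O[l] t := by
    simpa using ht.isBigO_pow_of_le (by norm_num : 1 ≤ 3)
  refine ((hu.trans hcube).add (((isBigO_refl t l).const_mul_left a).add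
    (hsq.const_mul_left b))).congr_left fun i => ?_
  ring

theorem isBigO_log_one_add_sub (ht : Tendsto t l (𝓝 0))
    (hu : (fun i => u i - (a * t i + b * t i ^ 2)) =O[l] fun i => t i ^ 3) :
    (fun i => log (1 + u i) - (a * t i + (b - a ^ 2 / 2) * t i ^ 2)) =O[l] fun i => t i ^ 3 := by
  have hut := isBigO_of_isBigO_sub_linear_add_sq ht hu
  have hlog : (fun i => log (1 + u i) - (u i - u i ^ 2 / 2)) =O[l] fun i => t i ^ 3 :=
    (isBigO_log_one_add_sub_add_sq.comp_tendsto (hut.trans_tendsto ht)).trans (hut.pow 3)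
  have hlin : (fun i => u i - a * t i) =O[l] fun i => t i ^ 2 := by
    refine ((hu.trans (ht.isBigO_pow_of_le (by norm_num))).add
      ((isBigO_refl _ l).const_mul_left b)).congr_left fun i => ?_
    ring
  have hsq : (fun i => u i ^ 2 - a ^ 2 * t i ^ 2) =O[l] fun i => t i ^ 3 :=
    (hlin.mul (hut.add ((isBigO_refl t l).const_mul_left a))).congr (fun i => by ring)
      (fun i => by ring)
  -- `log (1 + u) - (a t + (b - a²/2) t²)`
  --   `= (log (1 + u) - (u - u²/2)) + (u - (a t + b t²)) - (u² - a² t²) / 2`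
  refine ((hlog.add hu).sub (hsq.const_mul_left (1 / 2))).congr_left fun i => ?_
  ring

end Expansion

theorem isBigO_secondDiff_log_of_expansion {v : ℕ → ℝ} {γ₁ γ₂ : ℝ}
    (hv : (fun n : ℕ => v n - 1 - γ₁ * (n : ℝ) ^ (-(2 : ℝ) / 3) - γ₂ * (n : ℝ) ^ (-(4 : ℝ) / 3))
      =O[atTop] fun n : ℕ => (n : ℝ) ^ (-(2 : ℝ))) :
    (∀ᶠ n in atTop, 0 < v n) ∧
      secondDiff (fun n => log (v n)) =O[atTop] fun n : ℕ => (n : ℝ) ^ (-(2 : ℝ)) := by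
  set t : ℕ → ℝ := fun n => (n : ℝ) ^ (-(2 : ℝ) / 3) with ht_def
  have ht : Tendsto t atTop (𝓝 0) := by
    rw [ht_def, neg_div]
    exact (tendsto_rpow_neg_atTop (by norm_num)).comp tendsto_natCast_atTop_atTop
  have hpow : ∀ (n k : ℕ), t n ^ k = (n : ℝ) ^ (-(2 : ℝ) / 3 * k) := fun n k => by
    rw [← rpow_natCast, ← rpow_mul (Nat.cast_nonneg n)]
  have ht₂ : ∀ n : ℕ, (n : ℝ) ^ (-(4 : ℝ) / 3) = t n ^ 2 := fun n => by rw [hpow]; norm_num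
  have ht₃ : ∀ n : ℕ, (n : ℝ) ^ (-(2 : ℝ)) = t n ^ 3 := fun n => by rw [hpow]; norm_num
  have hu : (fun n => (v n - 1) - (γ₁ * t n + γ₂ * t n ^ 2)) =O[atTop] fun n => t n ^ 3 := by
    simp only [ht₂, ht₃] at hv
    exact hv.congr_left fun n => by ring
  have hpos : ∀ᶠ n in atTop, 0 < v n := by
    filter_upwards [((isBigO_of_isBigO_sub_linear_add_sq ht hu).trans_tendsto ht).eventually
      (lt_mem_nhds (by norm_num : (-1 : ℝ) < 0))] with n hn
    linarith
  refine ⟨hpos, ?_⟩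
  set E : ℕ → ℝ := fun n => log (v n) - (γ₁ * t n + (γ₂ - γ₁ ^ 2 / 2) * t n ^ 2)
  have hE : E =O[atTop] fun n : ℕ => (n : ℝ) ^ (-(2 : ℝ)) := by
    simpa only [add_sub_cancel, ht₃] using isBigO_log_one_add_sub ht hu
  have hsplit : secondDiff (fun n => log (v n)) = fun n =>
      γ₁ * secondDiff (fun n => (n : ℝ) ^ (-(2 : ℝ) / 3)) n +
        (γ₂ - γ₁ ^ 2 / 2) * secondDiff (fun n => (n : ℝ) ^ (-(4 : ℝ) / 3)) n + secondDiff E n := by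
    funext n
    simp only [secondDiff, E, ht₂]
    ring
  have hrpow : ∀ a : ℝ, a < 0 →
      secondDiff (fun n => (n : ℝ) ^ a) =O[atTop] fun n : ℕ => (n : ℝ) ^ (-(2 : ℝ)) := fun a ha =>
    (isTheta_secondDiff_rpow ha.ne (by linarith)).isBigO.trans
      (isLittleO_natCast_rpow_rpow (by linarith)).isBigO
  rw [hsplit]
  exact (((hrpow _ (by norm_num)).const_mul_left γ₁).add
    ((hrpow _ (by norm_num)).const_mul_left _)).add hE.secondDiff

theorem eventually_mul_add_neg_of_isLittleO {ι : Type*} {l : Filter ι} {f g : ι → ℝ} {c : ℝ}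
    (hc : 0 < c) (hg : ∀ᶠ i in l, g i < 0) (hf : f =o[l] g) : ∀ᶠ i in l, c * g i + f i < 0 := by
  filter_upwards [hg, hf.def (half_pos hc)] with i hgi hfi
  rw [norm_eq_abs, norm_eq_abs, abs_of_neg hgi] at hfi
  nlinarith [le_abs_self (f i)]

theorem eventually_secondDiff_neg_of_isBigO {g : ℕ → ℝ} {a b c C : ℝ} (ha₀ : 0 < a)
    (ha₁ : a < 1) (hb : b < a - 2) (hC : 0 < C)
    (hg : secondDiff g =O[atTop] fun n : ℕ => (n : ℝ) ^ b) :
    ∀ᶠ n in atTop, secondDiff (fun n => c + C * (n : ℝ) ^ a + g n) n < 0 := by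
  have hsmall : secondDiff g =o[atTop] secondDiff (fun n => (n : ℝ) ^ a) :=
    hg.trans_isLittleO ((isLittleO_natCast_rpow_rpow hb).trans_isTheta
      (isTheta_secondDiff_rpow ha₀.ne' ha₁.ne).symm)
  filter_upwards [eventually_mul_add_neg_of_isLittleO hC (eventually_secondDiff_rpow_neg ha₀ ha₁)
    hsmall] with n hn
  simp only [secondDiff] at hn ⊢
  linarith

theorem eventually_mul_lt_sq_of_secondDiff_log_neg {α : ℕ → ℝ} (hpos : ∀ᶠ n in atTop, 0 < α n)
    (hD : ∀ᶠ n in atTop, secondDiff (fun n => log (α n)) n < 0) :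
    ∀ᶠ n in atTop, α (n - 1) * α (n + 1) < α n ^ 2 := by
  filter_upwards [(tendsto_sub_atTop_nat 1).eventually hpos, hpos,
    (tendsto_add_atTop_nat 1).eventually hpos, hD] with n hprev h₀ hnext hn
  rw [← log_lt_log_iff (by positivity) (by positivity), log_mul hprev.ne' hnext.ne', log_pow]
  simp only [secondDiff] at hn
  push_cast
  linarith

theorem eventually_log_concave_of_asymptotic_general
    (C₁ C₂ C₃ : ℝ) (hC₁ : 0 < C₁) (hC₂ : 0 < C₂)
    (r γ₁ γ₂ : ℝ) (α : ℕ → ℝ) (β : ℕ → ℝ)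
    (hβ : ∀ n : ℕ, β n = C₂ * (n : ℝ) ^ r * Real.exp (C₁ * (n : ℝ) ^ ((2 : ℝ) / 3)))
    (N₀ : ℕ)
    (hα : ∀ n : ℕ, N₀ < n →
      |α n / β n - 1 - γ₁ * (n : ℝ) ^ (-(2 : ℝ) / 3) - γ₂ * (n : ℝ) ^ (-(4 : ℝ) / 3)|
        ≤ C₃ * (n : ℝ) ^ (-(2 : ℝ))) :
    ∃ N : ℕ, N₀ ≤ N ∧ ∀ n : ℕ, N < n → α n ^ 2 > α (n - 1) * α (n + 1) := by
  have hβ_pos : ∀ n : ℕ, 0 < n → 0 < β n := fun n hn => by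
    have : (0 : ℝ) < n := Nat.cast_pos.2 hn
    rw [hβ]
    positivity
  obtain ⟨hv_pos, hv_diff⟩ := isBigO_secondDiff_log_of_expansion (v := fun n => α n / β n)
    (IsBigO.of_bound C₃ (by
      filter_upwards [eventually_gt_atTop N₀] with n hn
      rw [norm_eq_abs, norm_of_nonneg (by positivity)]
      exact hα n hn))
  have hα_pos : ∀ᶠ n in atTop, 0 < α n := by
    filter_upwards [hv_pos, eventually_gt_atTop 0] with n hn hn₀
    exact (div_pos_iff_of_pos_right (hβ_pos n hn₀)).1 hn
  have hlog : (fun n => log (α n)) =ᶠ[atTop] fun n =>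
      log C₂ + C₁ * (n : ℝ) ^ ((2 : ℝ) / 3) + (r * log n + log (α n / β n)) := by
    filter_upwards [hα_pos, eventually_gt_atTop 0] with n hn hn₀
    have : (0 : ℝ) < n := Nat.cast_pos.2 hn₀
    rw [log_div hn.ne' (hβ_pos n hn₀).ne', hβ, log_mul (by positivity) (exp_ne_zero _),
      log_mul hC₂.ne' (by positivity), log_rpow this, log_exp]
    ring
  have hg : secondDiff (fun n => r * log n + log (α n / β n)) =O[atTop]
      fun n : ℕ => (n : ℝ) ^ (-(2 : ℝ)) := by
    rw [secondDiff_const_mul_add]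
    exact (isBigO_secondDiff_log.const_mul_left r).add hv_diff
  have hneg : ∀ᶠ n in atTop, secondDiff (fun n => log (α n)) n < 0 := by
    filter_upwards [hlog.secondDiff, eventually_secondDiff_neg_of_isBigO (a := 2 / 3)
      (by norm_num) (by norm_num) (by norm_num) hC₁ hg] with n hn hlt
    rwa [hn]
  obtain ⟨N, hN⟩ := eventually_atTop.1 (eventually_mul_lt_sq_of_secondDiff_log_neg hα_pos hneg)
  exact ⟨max N₀ N, le_max_left _ _, fun n hn => hN n (by omega)⟩

/-- If `α n = β n · (1 + γ₁·n^(−2/3) + γ₂·n^(−4/3) + O(n^(−2)))` with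
`β n = C₂ · n^r · exp (C₁ · n^(2/3))`, then `α` is eventually log-concave. -/
theorem eventually_log_concave_of_asymptotic
    (C₁ C₂ C₃ : ℝ) (hC₁ : 0 < C₁) (hC₂ : 0 < C₂) (hC₃ : 0 < C₃)
    (r γ₁ γ₂ : ℝ) (α : ℕ → ℝ) (β : ℕ → ℝ)
    (hβ : ∀ n : ℕ, β n = C₂ * (n : ℝ) ^ r * Real.exp (C₁ * (n : ℝ) ^ ((2 : ℝ) / 3)))
    (N₀ : ℕ)
    (hα : ∀ n : ℕ, N₀ < n →
      |α n / β n - 1 - γ₁ * (n : ℝ) ^ (-(2 : ℝ) / 3) - γ₂ * (n : ℝ) ^ (-(4 : ℝ) / 3)|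
        ≤ C₃ * (n : ℝ) ^ (-(2 : ℝ))) :
    ∃ N : ℕ, N₀ ≤ N ∧ ∀ n : ℕ, N < n → α n ^ 2 > α (n - 1) * α (n + 1) :=
  eventually_log_concave_of_asymptotic_general C₁ C₂ C₃ hC₁ hC₂ r γ₁ γ₂ α β hβ N₀ hα
end
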